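/- Fix an integer n ≥ 4, nodes a = x₀ < x₁ < ⋯ < x_n = b, data values f₀, …, f_n ∈ ℝ, and a point x ∈ (x₀, x_n) with x ≠ x_j for every j. For c > 0, let L_c denote the RTH quasi-interpolant built with shape parameter c. Then the second derivative (L_c)″(x) tends to 0 as c → 0⁺, and consequently the curvature κ_c(x) = |(L_c)″(x)| / (1 + ((L_c)′(x))²)^{3/2} of the curve y = (L_c f)(y) at x tends to 0 as c → 0⁺. -/

import Mathlib

/-- RTH basis function `φ_j(t) = (t − x_j)·tanh((t − x_j)/c)`. -/
noncomputable def rthPhi (c : ℝ) (X : ℕ → ℝ) (j : ℕ) (t : ℝ) : ℝ :=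
  (t - X j) * Real.tanh ((t - X j) / c)

/-- `ψ_j(t) = (φ_{j+1}(t) − φ_j(t))/(2(x_{j+1} − x_j)) − (φ_j(t) − φ_{j−1}(t))/(2(x_j − x_{j−1}))`. -/
noncomputable def rthPsi (c : ℝ) (X : ℕ → ℝ) (j : ℕ) (t : ℝ) : ℝ :=
  (rthPhi c X (j + 1) t - rthPhi c X j t) / (2 * (X (j + 1) - X j)) -
    (rthPhi c X j t - rthPhi c X (j - 1) t) / (2 * (X j - X (j - 1)))

/-- `α₀(t) = 1/2 + (φ₁(t) − (t − x₀))/(2(x₁ − x₀))`. -/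
noncomputable def rthAlpha0 (c : ℝ) (X : ℕ → ℝ) (t : ℝ) : ℝ :=
  1 / 2 + (rthPhi c X 1 t - (t - X 0)) / (2 * (X 1 - X 0))

/-- `α₁(t) = (φ₂(t) − φ₁(t))/(2(x₂ − x₁)) − (φ₁(t) − (t − x₀))/(2(x₁ − x₀))`. -/
noncomputable def rthAlpha1 (c : ℝ) (X : ℕ → ℝ) (t : ℝ) : ℝ :=
  (rthPhi c X 2 t - rthPhi c X 1 t) / (2 * (X 2 - X 1)) -
    (rthPhi c X 1 t - (t - X 0)) / (2 * (X 1 - X 0))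

/-- `α_{n−1}(t)`. -/
noncomputable def rthAlphaN1 (c : ℝ) (n : ℕ) (X : ℕ → ℝ) (t : ℝ) : ℝ :=
  ((X n - t) - rthPhi c X (n - 1) t) / (2 * (X n - X (n - 1))) -
    (rthPhi c X (n - 1) t - rthPhi c X (n - 2) t) / (2 * (X (n - 1) - X (n - 2)))

/-- `α_n(t) = 1/2 + (φ_{n−1}(t) − (x_n − t))/(2(x_n − x_{n−1}))`. -/
noncomputable def rthAlphaN (c : ℝ) (n : ℕ) (X : ℕ → ℝ) (t : ℝ) : ℝ :=
  1 / 2 + (rthPhi c X (n - 1) t - (X n - t)) / (2 * (X n - X (n - 1)))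

/-- The RTH quasi-interpolant
`(L_c f)(t) = f₀α₀(t) + f₁α₁(t) + Σ_{j=2}^{n−2} f_jψ_j(t) + f_{n−1}α_{n−1}(t) + f_nα_n(t)`. -/
noncomputable def rthQuasiInterp (c : ℝ) (n : ℕ) (X f : ℕ → ℝ) (t : ℝ) : ℝ :=
  f 0 * rthAlpha0 c X t + f 1 * rthAlpha1 c X t +
    (∑ j ∈ Finset.Icc 2 (n - 2), f j * rthPsi c X j t) +
    f (n - 1) * rthAlphaN1 c n X t + f n * rthAlphaN c n X t

noncomputable def rthD1 (c : ℝ) (X : ℕ → ℝ) (j : ℕ) (t : ℝ) : ℝ :=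
  Real.tanh ((t - X j) / c) + (t - X j) / c * (Real.cosh ((t - X j) / c) ^ 2)⁻¹

noncomputable def rthD2 (c : ℝ) (X : ℕ → ℝ) (j : ℕ) (t : ℝ) : ℝ :=
  2 / c * (Real.cosh ((t - X j) / c) ^ 2)⁻¹ -
    2 * (t - X j) / c ^ 2 * (Real.cosh ((t - X j) / c) ^ 2)⁻¹ * Real.tanh ((t - X j) / c)

noncomputable def rthG (c : ℝ) (n : ℕ) (X f : ℕ → ℝ) (t : ℝ) : ℝ :=
  f 0 * ((rthD1 c X 1 t - 1) / (2 * (X 1 - X 0))) +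
  f 1 * ((rthD1 c X 2 t - rthD1 c X 1 t) / (2 * (X 2 - X 1)) -
      (rthD1 c X 1 t - 1) / (2 * (X 1 - X 0))) +
  (∑ j ∈ Finset.Icc 2 (n - 2), f j *
      ((rthD1 c X (j + 1) t - rthD1 c X j t) / (2 * (X (j + 1) - X j)) -
        (rthD1 c X j t - rthD1 c X (j - 1) t) / (2 * (X j - X (j - 1))))) +
  f (n - 1) * ((-1 - rthD1 c X (n - 1) t) / (2 * (X n - X (n - 1))) -
      (rthD1 c X (n - 1) t - rthD1 c X (n - 2) t) / (2 * (X (n - 1) - X (n - 2)))) +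
  f n * ((rthD1 c X (n - 1) t - -1) / (2 * (X n - X (n - 1))))

noncomputable def rthH (c : ℝ) (n : ℕ) (X f : ℕ → ℝ) (t : ℝ) : ℝ :=
  f 0 * (rthD2 c X 1 t / (2 * (X 1 - X 0))) +
  f 1 * ((rthD2 c X 2 t - rthD2 c X 1 t) / (2 * (X 2 - X 1)) -
      rthD2 c X 1 t / (2 * (X 1 - X 0))) +
  (∑ j ∈ Finset.Icc 2 (n - 2), f j *
      ((rthD2 c X (j + 1) t - rthD2 c X j t) / (2 * (X (j + 1) - X j)) -
        (rthD2 c X j t - rthD2 c X (j - 1) t) / (2 * (X j - X (j - 1))))) +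
  f (n - 1) * (-rthD2 c X (n - 1) t / (2 * (X n - X (n - 1))) -
      (rthD2 c X (n - 1) t - rthD2 c X (n - 2) t) / (2 * (X (n - 1) - X (n - 2)))) +
  f n * (rthD2 c X (n - 1) t / (2 * (X n - X (n - 1))))

lemma tanh_hasDerivAt (y : ℝ) : HasDerivAt Real.tanh ((Real.cosh y ^ 2)⁻¹) y := by
  have h := (Real.hasDerivAt_sinh y).div (Real.hasDerivAt_cosh y) (Real.cosh_pos y).ne'
  have hfun : Real.tanh = fun z => Real.sinh z / Real.cosh z :=
    funext fun z => Real.tanh_eq_sinh_div_cosh z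
  rw [hfun]
  convert h using 1
  · rfl
  · rfl
  · rfl
  have h1 : Real.cosh y * Real.cosh y - Real.sinh y * Real.sinh y = 1 := by
    nlinarith [Real.cosh_sq_sub_sinh_sq y]
  rw [h1]
  exact (one_div _).symm.trans (by rw [one_div])

lemma phi_hasDerivAt (c : ℝ) (X : ℕ → ℝ) (j : ℕ) (t : ℝ) :
    HasDerivAt (rthPhi c X j) (rthD1 c X j t) t := by
  have h0 : HasDerivAt (fun s : ℝ => s - X j) 1 t := (hasDerivAt_id t).sub_const _
  have h1 : HasDerivAt (fun s : ℝ => (s - X j) / c) (1 / c) t := h0.div_const c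
  have h2 : HasDerivAt (fun s : ℝ => Real.tanh ((s - X j) / c))
      ((Real.cosh ((t - X j) / c) ^ 2)⁻¹ * (1 / c)) t :=
    (tanh_hasDerivAt _).comp t h1
  have h3 := h0.mul h2
  have he : rthD1 c X j t =
      1 * Real.tanh ((t - X j) / c) + (t - X j) * ((Real.cosh ((t - X j) / c) ^ 2)⁻¹ * (1 / c)) := by
    unfold rthD1; ring
  rw [he]
  exact h3

lemma D1_hasDerivAt (c : ℝ) (hc : c ≠ 0) (X : ℕ → ℝ) (j : ℕ) (t : ℝ) :
    HasDerivAt (rthD1 c X j) (rthD2 c X j t) t := by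
  have h1 : HasDerivAt (fun s : ℝ => (s - X j) / c) (1 / c) t :=
    ((hasDerivAt_id t).sub_const _).div_const c
  have hcosh : HasDerivAt (fun s : ℝ => Real.cosh ((s - X j) / c))
      (Real.sinh ((t - X j) / c) * (1 / c)) t := (Real.hasDerivAt_cosh _).comp t h1
  have hsq := hcosh.pow 2
  have hne : Real.cosh ((t - X j) / c) ^ 2 ≠ 0 := (pow_pos (Real.cosh_pos _) 2).ne'
  have hinv := hsq.inv hne
  have hmul := h1.mul hinv
  have htanh : HasDerivAt (fun s : ℝ => Real.tanh ((s - X j) / c))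
      ((Real.cosh ((t - X j) / c) ^ 2)⁻¹ * (1 / c)) t := (tanh_hasDerivAt _).comp t h1
  have htot := htanh.add hmul
  convert htot using 1
  · rfl
  · rfl
  · rfl
  unfold rthD2
  rw [Real.tanh_eq_sinh_div_cosh]
  have hcp := (Real.cosh_pos ((t - X j) / c)).ne'
  simp only [Pi.pow_apply, Pi.inv_apply]
  field_simp
  ring

lemma rth_hasDerivAt (c : ℝ) (n : ℕ) (X f : ℕ → ℝ) (t : ℝ) :
    HasDerivAt (rthQuasiInterp c n X f) (rthG c n X f t) t := by
  have hA0 : HasDerivAt (rthAlpha0 c X) ((rthD1 c X 1 t - 1) / (2 * (X 1 - X 0))) t :=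
    (((phi_hasDerivAt c X 1 t).sub ((hasDerivAt_id t).sub_const (X 0))).div_const
      (2 * (X 1 - X 0))).const_add (1 / 2 : ℝ)
  have hA1 : HasDerivAt (rthAlpha1 c X)
      ((rthD1 c X 2 t - rthD1 c X 1 t) / (2 * (X 2 - X 1)) -
        (rthD1 c X 1 t - 1) / (2 * (X 1 - X 0))) t :=
    (((phi_hasDerivAt c X 2 t).sub (phi_hasDerivAt c X 1 t)).div_const _).sub
      (((phi_hasDerivAt c X 1 t).sub ((hasDerivAt_id t).sub_const (X 0))).div_const _)
  have hPsi : ∀ j : ℕ, HasDerivAt (rthPsi c X j)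
      ((rthD1 c X (j + 1) t - rthD1 c X j t) / (2 * (X (j + 1) - X j)) -
        (rthD1 c X j t - rthD1 c X (j - 1) t) / (2 * (X j - X (j - 1)))) t := fun j =>
    (((phi_hasDerivAt c X (j + 1) t).sub (phi_hasDerivAt c X j t)).div_const _).sub
      (((phi_hasDerivAt c X j t).sub (phi_hasDerivAt c X (j - 1) t)).div_const _)
  have hAN1 : HasDerivAt (rthAlphaN1 c n X)
      ((-1 - rthD1 c X (n - 1) t) / (2 * (X n - X (n - 1))) -
        (rthD1 c X (n - 1) t - rthD1 c X (n - 2) t) / (2 * (X (n - 1) - X (n - 2)))) t :=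
    ((((hasDerivAt_id t).const_sub (X n)).sub (phi_hasDerivAt c X (n - 1) t)).div_const _).sub
      (((phi_hasDerivAt c X (n - 1) t).sub (phi_hasDerivAt c X (n - 2) t)).div_const _)
  have hAN : HasDerivAt (rthAlphaN c n X)
      ((rthD1 c X (n - 1) t - -1) / (2 * (X n - X (n - 1)))) t :=
    (((phi_hasDerivAt c X (n - 1) t).sub ((hasDerivAt_id t).const_sub (X n))).div_const
      (2 * (X n - X (n - 1)))).const_add (1 / 2 : ℝ)
  have hsum := HasDerivAt.fun_sum (u := Finset.Icc 2 (n - 2))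
    (A := fun j s => f j * rthPsi c X j s)
    (A' := fun j => f j *
      ((rthD1 c X (j + 1) t - rthD1 c X j t) / (2 * (X (j + 1) - X j)) -
        (rthD1 c X j t - rthD1 c X (j - 1) t) / (2 * (X j - X (j - 1))))) (x := t)
    (fun j _ => (hPsi j).const_mul (f j))
  exact ((((hA0.const_mul (f 0)).add (hA1.const_mul (f 1))).add hsum).add
    (hAN1.const_mul (f (n - 1)))).add (hAN.const_mul (f n))

lemma rthG_hasDerivAt (c : ℝ) (hc : c ≠ 0) (n : ℕ) (X f : ℕ → ℝ) (t : ℝ) :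
    HasDerivAt (rthG c n X f) (rthH c n X f t) t := by
  have h0 : HasDerivAt (fun s => f 0 * ((rthD1 c X 1 s - 1) / (2 * (X 1 - X 0))))
      (f 0 * (rthD2 c X 1 t / (2 * (X 1 - X 0)))) t :=
    (((D1_hasDerivAt c hc X 1 t).sub_const 1).div_const _).const_mul (f 0)
  have h1 : HasDerivAt (fun s => f 1 * ((rthD1 c X 2 s - rthD1 c X 1 s) / (2 * (X 2 - X 1)) -
      (rthD1 c X 1 s - 1) / (2 * (X 1 - X 0))))
      (f 1 * ((rthD2 c X 2 t - rthD2 c X 1 t) / (2 * (X 2 - X 1)) -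
        rthD2 c X 1 t / (2 * (X 1 - X 0)))) t :=
    ((((D1_hasDerivAt c hc X 2 t).sub (D1_hasDerivAt c hc X 1 t)).div_const _).sub
      (((D1_hasDerivAt c hc X 1 t).sub_const 1).div_const _)).const_mul (f 1)
  have hsum := HasDerivAt.fun_sum (u := Finset.Icc 2 (n - 2))
    (A := fun j s => f j *
      ((rthD1 c X (j + 1) s - rthD1 c X j s) / (2 * (X (j + 1) - X j)) -
        (rthD1 c X j s - rthD1 c X (j - 1) s) / (2 * (X j - X (j - 1)))))
    (A' := fun j => f j *
      ((rthD2 c X (j + 1) t - rthD2 c X j t) / (2 * (X (j + 1) - X j)) -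
        (rthD2 c X j t - rthD2 c X (j - 1) t) / (2 * (X j - X (j - 1))))) (x := t)
    (fun j _ => ((((D1_hasDerivAt c hc X (j + 1) t).sub (D1_hasDerivAt c hc X j t)).div_const _).sub
      (((D1_hasDerivAt c hc X j t).sub (D1_hasDerivAt c hc X (j - 1) t)).div_const _)).const_mul (f j))
  have hn1 : HasDerivAt (fun s => f (n - 1) * ((-1 - rthD1 c X (n - 1) s) / (2 * (X n - X (n - 1))) -
      (rthD1 c X (n - 1) s - rthD1 c X (n - 2) s) / (2 * (X (n - 1) - X (n - 2)))))
      (f (n - 1) * (-rthD2 c X (n - 1) t / (2 * (X n - X (n - 1))) -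
        (rthD2 c X (n - 1) t - rthD2 c X (n - 2) t) / (2 * (X (n - 1) - X (n - 2))))) t :=
    ((((D1_hasDerivAt c hc X (n - 1) t).const_sub (-1)).div_const _).sub
      (((D1_hasDerivAt c hc X (n - 1) t).sub (D1_hasDerivAt c hc X (n - 2) t)).div_const _)).const_mul
      (f (n - 1))
  have hnn : HasDerivAt (fun s => f n * ((rthD1 c X (n - 1) s - -1) / (2 * (X n - X (n - 1)))))
      (f n * (rthD2 c X (n - 1) t / (2 * (X n - X (n - 1))))) t :=
    (((D1_hasDerivAt c hc X (n - 1) t).sub_const (-1)).div_const _).const_mul (f n)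
  exact (((h0.add h1).add hsum).add hn1).add hnn

lemma half_exp_abs_le_cosh (y : ℝ) : Real.exp |y| / 2 ≤ Real.cosh y := by
  rw [Real.cosh_eq]
  rcases abs_cases y with ⟨h, _⟩ | ⟨h, _⟩ <;> rw [h] <;>
    nlinarith [Real.exp_pos y, Real.exp_pos (-y)]

lemma cosh_sq_inv_le (y : ℝ) : (Real.cosh y ^ 2)⁻¹ ≤ 4 * Real.exp (-(2 * |y|)) := by
  have h := half_exp_abs_le_cosh y
  have h1 : Real.exp (2 * |y|) / 4 ≤ Real.cosh y ^ 2 := by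
    have h2 : Real.exp (2 * |y|) = Real.exp |y| * Real.exp |y| := by
      rw [two_mul, Real.exp_add]
    nlinarith [Real.exp_pos |y|, Real.cosh_pos y]
  calc (Real.cosh y ^ 2)⁻¹ ≤ (Real.exp (2 * |y|) / 4)⁻¹ :=
        inv_anti₀ (by positivity) h1
    _ = 4 * Real.exp (-(2 * |y|)) := by
        rw [Real.exp_neg]; field_simp

lemma abs_tanh_le_one (y : ℝ) : |Real.tanh y| ≤ 1 := by
  rw [Real.tanh_eq_sinh_div_cosh, abs_div, abs_of_pos (Real.cosh_pos y),
    div_le_one (Real.cosh_pos y), Real.abs_sinh]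
  calc Real.sinh |y| ≤ Real.cosh |y| := (Real.sinh_lt_cosh _).le
    _ = Real.cosh y := Real.cosh_abs y

/-- `b * c⁻ᵏ * exp (-(a/c)) → 0` as `c → 0⁺`. -/
lemma poly_exp_tendsto (k : ℕ) (a b : ℝ) (ha : 0 < a) :
    Filter.Tendsto (fun c : ℝ => b * (c⁻¹) ^ k * Real.exp (-(a * c⁻¹)))
      (nhdsWithin 0 (Set.Ioi 0)) (nhds 0) := by
  have h1 : Filter.Tendsto (fun s : ℝ => b * s ^ k * Real.exp (-(a * s))) Filter.atTop (nhds 0) := by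
    have h2 := (Real.tendsto_pow_mul_exp_neg_atTop_nhds_zero k).comp
      (Filter.Tendsto.const_mul_atTop ha Filter.tendsto_id)
    have h3 := h2.const_mul (b / a ^ k)
    rw [mul_zero] at h3
    refine h3.congr fun s => ?_
    simp only [Function.comp_apply, id_eq, mul_pow]
    have hak : a ^ k ≠ 0 := (pow_pos ha k).ne'
    field_simp
  exact h1.comp tendsto_inv_nhdsGT_zero

lemma D2_tendsto_aux (d : ℝ) (hd : d ≠ 0) :
    Filter.Tendsto (fun c : ℝ => 2 / c * (Real.cosh (d / c) ^ 2)⁻¹ -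
        2 * d / c ^ 2 * (Real.cosh (d / c) ^ 2)⁻¹ * Real.tanh (d / c))
      (nhdsWithin 0 (Set.Ioi 0)) (nhds 0) := by
  have hda : 0 < 2 * |d| := by positivity
  have hT1 : Filter.Tendsto (fun c : ℝ => 2 / c * (Real.cosh (d / c) ^ 2)⁻¹)
      (nhdsWithin 0 (Set.Ioi 0)) (nhds 0) := by
    apply squeeze_zero_norm' _ (poly_exp_tendsto 1 (2 * |d|) 8 hda)
    filter_upwards [self_mem_nhdsWithin] with c hc
    have hcpos : (0 : ℝ) < c := hc
    have habs : |d / c| = |d| * c⁻¹ := by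
      rw [abs_div, abs_of_pos hcpos, div_eq_mul_inv]
    have hinv := cosh_sq_inv_le (d / c)
    calc ‖2 / c * (Real.cosh (d / c) ^ 2)⁻¹‖
        = 2 / c * (Real.cosh (d / c) ^ 2)⁻¹ := by
          rw [Real.norm_eq_abs, abs_of_nonneg (by positivity)]
      _ ≤ 2 / c * (4 * Real.exp (-(2 * |d / c|))) := by
          apply mul_le_mul_of_nonneg_left hinv (by positivity)
      _ = 8 * c⁻¹ ^ 1 * Real.exp (-(2 * |d| * c⁻¹)) := by
          rw [habs, pow_one]
          rw [show -(2 * (|d| * c⁻¹)) = -(2 * |d| * c⁻¹) by ring]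
          field_simp
          ring
  have hT2 : Filter.Tendsto
      (fun c : ℝ => 2 * d / c ^ 2 * (Real.cosh (d / c) ^ 2)⁻¹ * Real.tanh (d / c))
      (nhdsWithin 0 (Set.Ioi 0)) (nhds 0) := by
    apply squeeze_zero_norm' _ (poly_exp_tendsto 2 (2 * |d|) (8 * |d|) hda)
    filter_upwards [self_mem_nhdsWithin] with c hc
    have hcpos : (0 : ℝ) < c := hc
    have habs : |d / c| = |d| * c⁻¹ := by
      rw [abs_div, abs_of_pos hcpos, div_eq_mul_inv]
    have hinv := cosh_sq_inv_le (d / c)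
    have htanh := abs_tanh_le_one (d / c)
    have hcoshpos : (0:ℝ) < (Real.cosh (d / c) ^ 2)⁻¹ := by positivity
    calc ‖2 * d / c ^ 2 * (Real.cosh (d / c) ^ 2)⁻¹ * Real.tanh (d / c)‖
        = 2 * |d| / c ^ 2 * (Real.cosh (d / c) ^ 2)⁻¹ * |Real.tanh (d / c)| := by
          rw [Real.norm_eq_abs, abs_mul, abs_mul, abs_div,
            abs_of_pos (by positivity : (0:ℝ) < c ^ 2), abs_of_pos hcoshpos, abs_mul]
          norm_num
      _ ≤ 2 * |d| / c ^ 2 * (Real.cosh (d / c) ^ 2)⁻¹ * 1 := by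
          apply mul_le_mul_of_nonneg_left htanh (by positivity)
      _ = 2 * |d| / c ^ 2 * (Real.cosh (d / c) ^ 2)⁻¹ := by ring
      _ ≤ 2 * |d| / c ^ 2 * (4 * Real.exp (-(2 * |d / c|))) := by
          apply mul_le_mul_of_nonneg_left hinv (by positivity)
      _ = 8 * |d| * c⁻¹ ^ 2 * Real.exp (-(2 * |d| * c⁻¹)) := by
          rw [habs]
          rw [show -(2 * (|d| * c⁻¹)) = -(2 * |d| * c⁻¹) by ring]
          field_simp
          ring
  have h := hT1.sub hT2
  rwa [sub_zero] at h

lemma rthD2_tendsto (X : ℕ → ℝ) (j : ℕ) (x : ℝ) (hd : x ≠ X j) :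
    Filter.Tendsto (fun c : ℝ => rthD2 c X j x) (nhdsWithin 0 (Set.Ioi 0)) (nhds 0) := by
  have h := D2_tendsto_aux (x - X j) (sub_ne_zero.mpr hd)
  simpa only [rthD2] using h

/-- The curvature of the curve `y = F(x)` at `x`:
`κ(x) = |F″(x)| / (1 + (F′(x))²)^{3/2}`. -/
noncomputable def curvature (F : ℝ → ℝ) (x : ℝ) : ℝ :=
  |deriv (deriv F) x| / (1 + (deriv F x) ^ 2) ^ ((3 : ℝ) / 2)

/-- For a point `x ∈ (x₀, x_n)` different from all nodes, the second derivative
`(L_c)″(x)` of the RTH quasi-interpolant tends to `0` as `c → 0⁺`, and consequently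
the curvature `κ_c(x)` of the curve `y = (L_c f)(y)` at `x` tends to `0` as `c → 0⁺`. -/
theorem rth_quasi_interp_curvature_tendsto_zero
    (n : ℕ) (hn : 4 ≤ n) (X : ℕ → ℝ) (hX : StrictMonoOn X (Set.Icc 0 n))
    (f : ℕ → ℝ) (x : ℝ) (hx : x ∈ Set.Ioo (X 0) (X n))
    (hxj : ∀ j ≤ n, x ≠ X j) :
    Filter.Tendsto (fun c : ℝ => deriv (deriv (rthQuasiInterp c n X f)) x)
      (nhdsWithin 0 (Set.Ioi 0)) (nhds 0) ∧
    Filter.Tendsto (fun c : ℝ => curvature (rthQuasiInterp c n X f) x)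
      (nhdsWithin 0 (Set.Ioi 0)) (nhds 0) := by
  have hD2 : ∀ j, j ≤ n → Filter.Tendsto (fun c : ℝ => rthD2 c X j x)
      (nhdsWithin 0 (Set.Ioi 0)) (nhds 0) := fun j hj => rthD2_tendsto X j x (hxj j hj)
  have h1' := hD2 1 (by omega)
  have h2' := hD2 2 (by omega)
  have hn1' := hD2 (n - 1) (by omega)
  have hn2' := hD2 (n - 2) (by omega)
  have hH : Filter.Tendsto (fun c : ℝ => rthH c n X f x)
      (nhdsWithin 0 (Set.Ioi 0)) (nhds 0) := by
    have t0 : Filter.Tendsto (fun c : ℝ => f 0 * (rthD2 c X 1 x / (2 * (X 1 - X 0))))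
        (nhdsWithin 0 (Set.Ioi 0)) (nhds 0) := by
      simpa using (h1'.div_const (2 * (X 1 - X 0))).const_mul (f 0)
    have t1 : Filter.Tendsto (fun c : ℝ =>
        f 1 * ((rthD2 c X 2 x - rthD2 c X 1 x) / (2 * (X 2 - X 1)) -
          rthD2 c X 1 x / (2 * (X 1 - X 0))))
        (nhdsWithin 0 (Set.Ioi 0)) (nhds 0) := by
      simpa using (((h2'.sub h1').div_const (2 * (X 2 - X 1))).sub
        (h1'.div_const (2 * (X 1 - X 0)))).const_mul (f 1)
    have tsum : Filter.Tendsto (fun c : ℝ => ∑ j ∈ Finset.Icc 2 (n - 2), f j *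
        ((rthD2 c X (j + 1) x - rthD2 c X j x) / (2 * (X (j + 1) - X j)) -
          (rthD2 c X j x - rthD2 c X (j - 1) x) / (2 * (X j - X (j - 1)))))
        (nhdsWithin 0 (Set.Ioi 0)) (nhds 0) := by
      have h := tendsto_finset_sum (Finset.Icc 2 (n - 2)) (f := fun (j : ℕ) (c : ℝ) =>
        f j * ((rthD2 c X (j + 1) x - rthD2 c X j x) / (2 * (X (j + 1) - X j)) -
          (rthD2 c X j x - rthD2 c X (j - 1) x) / (2 * (X j - X (j - 1)))))
        (a := fun _ => (0 : ℝ)) (x := nhdsWithin 0 (Set.Ioi 0)) ?_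
      · simpa using h
      · intro j hj
        obtain ⟨hj2, hjn⟩ := Finset.mem_Icc.mp hj
        have e1 := hD2 (j + 1) (by omega)
        have e2 := hD2 j (by omega)
        have e3 := hD2 (j - 1) (by omega)
        simpa using (((e1.sub e2).div_const (2 * (X (j + 1) - X j))).sub
          ((e2.sub e3).div_const (2 * (X j - X (j - 1))))).const_mul (f j)
    have tn1 : Filter.Tendsto (fun c : ℝ =>
        f (n - 1) * (-rthD2 c X (n - 1) x / (2 * (X n - X (n - 1))) -
          (rthD2 c X (n - 1) x - rthD2 c X (n - 2) x) / (2 * (X (n - 1) - X (n - 2)))))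
        (nhdsWithin 0 (Set.Ioi 0)) (nhds 0) := by
      simpa using ((hn1'.neg.div_const (2 * (X n - X (n - 1)))).sub
        ((hn1'.sub hn2').div_const (2 * (X (n - 1) - X (n - 2))))).const_mul (f (n - 1))
    have tnn : Filter.Tendsto (fun c : ℝ =>
        f n * (rthD2 c X (n - 1) x / (2 * (X n - X (n - 1)))))
        (nhdsWithin 0 (Set.Ioi 0)) (nhds 0) := by
      simpa using (hn1'.div_const (2 * (X n - X (n - 1)))).const_mul (f n)
    have h := (((t0.add t1).add tsum).add tn1).add tnn
    simp only [rthH]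
    simpa using h
  have hmain : Filter.Tendsto (fun c : ℝ => deriv (deriv (rthQuasiInterp c n X f)) x)
      (nhdsWithin 0 (Set.Ioi 0)) (nhds 0) := by
    refine Filter.Tendsto.congr' ?_ hH
    filter_upwards [self_mem_nhdsWithin] with c hc
    have hc' : (c : ℝ) ≠ 0 := ne_of_gt hc
    have hder : deriv (rthQuasiInterp c n X f) = rthG c n X f :=
      funext fun t => (rth_hasDerivAt c n X f t).deriv
    rw [hder, (rthG_hasDerivAt c hc' n X f x).deriv]
  refine ⟨hmain, ?_⟩
  have habs : Filter.Tendsto (fun c : ℝ => |deriv (deriv (rthQuasiInterp c n X f)) x|)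
      (nhdsWithin 0 (Set.Ioi 0)) (nhds 0) := by
    simpa using hmain.abs
  apply squeeze_zero (fun c => ?_) (fun c => ?_) habs
  · exact div_nonneg (abs_nonneg _)
      (Real.rpow_pos_of_pos (by positivity) _).le
  · unfold curvature
    apply div_le_self (abs_nonneg _)
    calc (1 : ℝ) = (1 : ℝ) ^ ((3 : ℝ) / 2) := (Real.one_rpow _).symm
      _ ≤ (1 + (deriv (rthQuasiInterp c n X f) x) ^ 2) ^ ((3 : ℝ) / 2) :=
        Real.rpow_le_rpow zero_le_one (by nlinarith [sq_nonneg (deriv (rthQuasiInterp c n X f) x)])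
          (by norm_num)
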